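/- There exists a constant C > 0 such that for every real c ≥ 1 and all p, q ∈ ℝ³ with p ≠ q, the quadratic form of the relativistic Landau collision kernel in the direction p satisfies Σ_{i,j=1}^3 Φ^{c,ij}(p,q) p_i p_j ≤ C·((p⁰)³/c³)·⟨q⟩⁶·|p−q|^{−1}. -/

import Mathlib

open Real MeasureTheory
open scoped BigOperators

noncomputable section

/-- Momentum space `ℝ³`. -/
abbrev E3 := EuclideanSpace ℝ (Fin 3)

/-- Relativistic energy `p⁰ = √(c² + |p|²)`. -/
def pZ (c : ℝ) (p : E3) : ℝ := Real.sqrt (c ^ 2 + ‖p‖ ^ 2)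

/-- Japanese bracket `⟨p⟩ = √(1 + |p|²)`. -/
def jb (p : E3) : ℝ := Real.sqrt (1 + ‖p‖ ^ 2)

/-- Euclidean inner product on `ℝ³`. -/
def dotp (p q : E3) : ℝ := inner ℝ p q

/-- `Λ^c(p,q) = ((p⁰q⁰ − p·q)²/c⁴)·[((p⁰q⁰ − p·q)² − c⁴)/c²]^{−3/2}`. -/
def Lam (c : ℝ) (p q : E3) : ℝ :=
  (pZ c p * pZ c q - dotp p q) ^ 2 / c ^ 4 *
    (((pZ c p * pZ c q - dotp p q) ^ 2 - c ^ 4) / c ^ 2) ^ (-(3 : ℝ) / 2)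

/-- The matrix `S^c(p,q)` with entries
`S^{c,ij}(p,q) = [((p⁰q⁰ − p·q)² − c⁴)/c²]·δ_{ij} − (p−q)_i(p−q)_j
 + [(p⁰q⁰ − p·q − c²)/c²]·(p_i q_j + q_i p_j)`. -/
def Smat (c : ℝ) (p q : E3) (i j : Fin 3) : ℝ :=
  ((pZ c p * pZ c q - dotp p q) ^ 2 - c ^ 4) / c ^ 2 * (if i = j then 1 else 0)
    - (p i - q i) * (p j - q j)
    + (pZ c p * pZ c q - dotp p q - c ^ 2) / c ^ 2 * (p i * q j + q i * p j)

/-- The relativistic Landau collision kernel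
`Φ^{c,ij}(p,q) = (c/p⁰)(c/q⁰)·Λ^c(p,q)·S^{c,ij}(p,q)`. -/
def Phi (c : ℝ) (p q : E3) (i j : Fin 3) : ℝ :=
  c / pZ c p * (c / pZ c q) * Lam c p q * Smat c p q i j

set_option maxHeartbeats 1000000 in
/-- Auxiliary elementary inequalities. -/
lemma stmt11_prelim (c P R J D Bp Bq a : ℝ)
    (hc : 1 ≤ c) (hP2 : P ^ 2 = c ^ 2 + Bp) (hJ2 : J ^ 2 = 1 + Bq)
    (hcP : c ≤ P) (hcR : c ≤ R) (hRPJ : R ≤ P * J) (h1J : 1 ≤ J) (h1P : 1 ≤ P)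
    (hCS : D ^ 2 ≤ Bp * Bq) (hBp : 0 ≤ Bp) (hBq : 0 ≤ Bq)
    (hPR2 : (P * R) ^ 2 = (c ^ 2 + Bp) * (c ^ 2 + Bq))
    (ha2 : a ^ 2 = Bp - 2 * D + Bq) (ha0 : 0 < a) :
    0 ≤ Bp * Bq - D ^ 2 ∧ (Bp * Bq - D ^ 2 ≤ a ^ 2 * J ^ 2) ∧
    (0 < P * R - D - c ^ 2) ∧
    (c ^ 2 * a ^ 2 ≤ 3 * (P * R) * (P * R - D - c ^ 2)) ∧
    (c ^ 2 * a ^ 2 ≤ 8 * (P * J) ^ 2 * (P * R - D - c ^ 2)) ∧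
    (a ≤ 2 * (P * J)) := by
  have hc0 : (0:ℝ) < c := lt_of_lt_of_le one_pos hc
  have hP0 : (0:ℝ) < P := lt_of_lt_of_le hc0 hcP
  have hR0 : (0:ℝ) < R := lt_of_lt_of_le hc0 hcR
  have hJ0 : (0:ℝ) < J := lt_of_lt_of_le one_pos h1J
  have hPR0 : (0:ℝ) < P * R := mul_pos hP0 hR0
  have hG0 : (0:ℝ) ≤ Bp * Bq - D ^ 2 := by linarith
  have hD2 : D ^ 2 ≤ (P * R) ^ 2 := by nlinarith [mul_nonneg hBp hBq, sq_nonneg c]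
  have hDle : D ≤ P * R := by nlinarith
  have hDge : -(P * R) ≤ D := by nlinarith
  have hids : (P * R - D - c ^ 2) * (P * R + c ^ 2 + D)
      = c ^ 2 * a ^ 2 + (Bp * Bq - D ^ 2) := by
    linear_combination hPR2 - c ^ 2 * ha2
  have hdenom : (0:ℝ) < P * R + c ^ 2 + D := by nlinarith
  have hnum : (0:ℝ) < c ^ 2 * a ^ 2 + (Bp * Bq - D ^ 2) :=
    add_pos_of_pos_of_nonneg (by positivity) hG0
  have hs0 : (0:ℝ) < P * R - D - c ^ 2 := by nlinarith
  have hc2PR : c ^ 2 ≤ P * R := by nlinarith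
  have hdle3 : P * R + c ^ 2 + D ≤ 3 * (P * R) := by linarith
  have hsl : c ^ 2 * a ^ 2 ≤ 3 * (P * R) * (P * R - D - c ^ 2) := by
    linarith [hids, hG0, mul_le_mul_of_nonneg_left hdle3 hs0.le]
  have hBpP : Bp ≤ P ^ 2 := by nlinarith [sq_nonneg c]
  have hBqJ : Bq ≤ J ^ 2 := by linarith
  have hPRle : P * R ≤ P ^ 2 * J := by nlinarith [mul_le_mul_of_nonneg_left hRPJ hP0.le]
  have hPJle : P ^ 2 * J ≤ (P * J) ^ 2 := by
    nlinarith [mul_le_mul_of_nonneg_left h1J (show (0:ℝ) ≤ P ^ 2 * J by positivity)]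
  have hcP2 : c ^ 2 ≤ (P * J) ^ 2 := by nlinarith
  have hdle8 : P * R + c ^ 2 + D ≤ 8 * (P * J) ^ 2 := by
    linarith [hPRle, hPJle, hcP2, hDle, sq_nonneg (P * J)]
  have hsl2 : c ^ 2 * a ^ 2 ≤ 8 * (P * J) ^ 2 * (P * R - D - c ^ 2) := by
    linarith [hids, hG0, mul_le_mul_of_nonneg_left hdle8 hs0.le]
  have hGa : Bp * Bq - D ^ 2 ≤ a ^ 2 * J ^ 2 := by
    have h : a ^ 2 * J ^ 2 = (Bp - 2 * D + Bq) * (1 + Bq) := by rw [ha2, hJ2]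
    rw [h]
    linarith [sq_nonneg (Bq - D), sq_nonneg a, ha2]
  have hDJ2 : D ^ 2 ≤ (P * J) ^ 2 := by
    nlinarith [mul_le_mul hBpP hBqJ hBq (sq_nonneg P)]
  have hPJ0 : (0:ℝ) < P * J := mul_pos hP0 hJ0
  have hDgePJ : -(P * J) ≤ D := by
    have habs : |D| ≤ P * J := by
      have h := Real.sqrt_le_sqrt hDJ2
      rwa [Real.sqrt_sq_eq_abs, Real.sqrt_sq hPJ0.le] at h
    linarith [neg_abs_le D, abs_nonneg D, habs]
  have haPJ : a ≤ 2 * (P * J) := by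
    have h2 : a ^ 2 ≤ (P + J) ^ 2 := by linarith [ha2, hBpP, hBqJ, hDgePJ, mul_pos hP0 hJ0]
    have h3 : a ≤ P + J := by
      have h := Real.sqrt_le_sqrt h2
      rwa [Real.sqrt_sq ha0.le, Real.sqrt_sq (by positivity : (0:ℝ) ≤ P + J)] at h
    linarith [h3, mul_nonneg (sub_nonneg.mpr h1P) (sub_nonneg.mpr h1J)]
  exact ⟨hG0, hGa, hs0, hsl, hsl2, haPJ⟩

set_option maxHeartbeats 1000000 in
/-- The main quantitative estimate, phrased for abstract real numbers. -/
lemma stmt11_endgame (c P R J a s G ρ τ : ℝ)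
    (hc : 1 ≤ c) (hcP : c ≤ P) (hcR : c ≤ R) (h1J : 1 ≤ J)
    (ha0 : 0 < a) (hG0 : 0 ≤ G) (hGa : G ≤ a ^ 2 * J ^ 2) (hs0 : 0 < s)
    (hsl : c ^ 2 * a ^ 2 ≤ 3 * (P * R) * s) (hsl2 : c ^ 2 * a ^ 2 ≤ 8 * (P * J) ^ 2 * s)
    (haPJ : a ≤ 2 * (P * J))
    (hτ : τ = s + c ^ 2) (hρs : ρ = s ^ 2 / c ^ 2 + 2 * s) :
    c / P * (c / R) * (τ ^ 2 / c ^ 4 * ρ ^ (-(3 : ℝ) / 2)) * (G * P ^ 2 / c ^ 2)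
      ≤ 18 * (P ^ 3 / c ^ 3) * J ^ 3 / a := by
  have hc0 : (0:ℝ) < c := lt_of_lt_of_le one_pos hc
  have hP0 : (0:ℝ) < P := lt_of_lt_of_le hc0 hcP
  have hR0 : (0:ℝ) < R := lt_of_lt_of_le hc0 hcR
  have hJ0 : (0:ℝ) < J := lt_of_lt_of_le one_pos h1J
  have hρ0 : (0:ℝ) < ρ := by rw [hρs]; positivity
  set W := Real.sqrt ρ with hW
  have hW0 : (0:ℝ) < W := Real.sqrt_pos.mpr hρ0
  have hρ1 : s ^ 2 / c ^ 2 ≤ ρ := by rw [hρs]; nlinarith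
  have hρ2 : 2 * s ≤ ρ := by rw [hρs]; exact le_add_of_nonneg_left (by positivity)
  have hW1 : s / c ≤ W := by
    refine (Real.le_sqrt (by positivity) hρ0.le).mpr ?_
    rw [div_pow]; exact hρ1
  have hW2 : c * a / (2 * (P * J)) ≤ W := by
    refine (Real.le_sqrt (by positivity) hρ0.le).mpr ?_
    have h4 : (c * a / (2 * (P * J))) ^ 2 = c ^ 2 * a ^ 2 / (4 * (P * J) ^ 2) := by ring
    rw [h4, div_le_iff₀ (by positivity)]
    nlinarith [mul_le_mul_of_nonneg_right hρ2 (show (0:ℝ) ≤ 4 * (P * J) ^ 2 by positivity)]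
  -- rewrite the rpow
  have hr : ρ ^ (-(3 : ℝ) / 2) = (ρ * W)⁻¹ := by
    rw [show (-(3:ℝ)/2) = -(3/2) by norm_num, Real.rpow_neg hρ0.le]
    congr 1
    rw [show (3:ℝ)/2 = 1 + 1/2 by norm_num, Real.rpow_add hρ0, Real.rpow_one, hW,
      Real.sqrt_eq_rpow]
  rw [hr, hτ]
  have hE : c / P * (c / R) * ((s + c ^ 2) ^ 2 / c ^ 4 * (ρ * W)⁻¹) * (G * P ^ 2 / c ^ 2)
      = (s + c ^ 2) ^ 2 * P * G / (R * c ^ 4 * (ρ * W)) := by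
    field_simp
  rw [hE]
  have hmm1 : s ^ 3 / c ^ 3 ≤ ρ * W := by
    have h := mul_le_mul hρ1 hW1 (by positivity) (le_trans (by positivity) hρ1)
    calc s ^ 3 / c ^ 3 = s ^ 2 / c ^ 2 * (s / c) := by ring
    _ ≤ ρ * W := h
  have hmm2 : s * (c * a) / (P * J) ≤ ρ * W := by
    have h := mul_le_mul hρ2 hW2 (by positivity) hρ0.le
    calc s * (c * a) / (P * J) = 2 * s * (c * a / (2 * (P * J))) := by ring
    _ ≤ ρ * W := h
  have hT : (s + c ^ 2) ^ 2 ≤ 2 * s ^ 2 + 2 * c ^ 4 := by nlinarith [sq_nonneg (s - c ^ 2)]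
  have step1 : (s + c ^ 2) ^ 2 * P * G / (R * c ^ 4 * (ρ * W))
      ≤ (2 * s ^ 2 + 2 * c ^ 4) * P * G / (R * c ^ 4 * (ρ * W)) := by
    gcongr
  have split : (2 * s ^ 2 + 2 * c ^ 4) * P * G / (R * c ^ 4 * (ρ * W))
      = 2 * s ^ 2 * P * G / (R * c ^ 4 * (ρ * W)) + 2 * c ^ 4 * P * G / (R * c ^ 4 * (ρ * W)) := by
    ring
  have T1 : 2 * s ^ 2 * P * G / (R * c ^ 4 * (ρ * W)) ≤ 12 * (P ^ 3 * J ^ 3) / (c ^ 3 * a) := by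
    have d1 : R * c ^ 4 * (s ^ 3 / c ^ 3) ≤ R * c ^ 4 * (ρ * W) :=
      mul_le_mul_of_nonneg_left hmm1 (by positivity)
    calc 2 * s ^ 2 * P * G / (R * c ^ 4 * (ρ * W))
        ≤ 2 * s ^ 2 * P * G / (R * c ^ 4 * (s ^ 3 / c ^ 3)) :=
          div_le_div_of_nonneg_left (by positivity) (by positivity) d1
      _ = 2 * P * G / (R * c * s) := by field_simp
      _ ≤ 12 * (P ^ 3 * J ^ 3) / (c ^ 3 * a) := by
          rw [div_le_div_iff₀ (by positivity) (by positivity)]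
          nlinarith [mul_le_mul_of_nonneg_left hGa (show (0:ℝ) ≤ 2 * P * c ^ 3 * a by positivity),
            mul_le_mul_of_nonneg_left hsl (show (0:ℝ) ≤ 2 * P * J ^ 2 * c * a by positivity),
            mul_le_mul_of_nonneg_right haPJ
              (show (0:ℝ) ≤ 6 * P ^ 2 * J ^ 2 * R * c * s by positivity)]
  have T2 : 2 * c ^ 4 * P * G / (R * c ^ 4 * (ρ * W)) ≤ 6 * (P ^ 3 * J ^ 3) / (c ^ 3 * a) := by
    have d2 : R * c ^ 4 * (s * (c * a) / (P * J)) ≤ R * c ^ 4 * (ρ * W) :=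
      mul_le_mul_of_nonneg_left hmm2 (by positivity)
    calc 2 * c ^ 4 * P * G / (R * c ^ 4 * (ρ * W))
        ≤ 2 * c ^ 4 * P * G / (R * c ^ 4 * (s * (c * a) / (P * J))) :=
          div_le_div_of_nonneg_left (by positivity) (by positivity) d2
      _ = 2 * P ^ 2 * J * G / (R * c * a * s) := by field_simp
      _ ≤ 6 * (P ^ 3 * J ^ 3) / (c ^ 3 * a) := by
          rw [div_le_div_iff₀ (by positivity) (by positivity)]
          nlinarith [mul_le_mul_of_nonneg_left hGa
              (show (0:ℝ) ≤ 2 * P ^ 2 * J * c ^ 3 * a by positivity),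
            mul_le_mul_of_nonneg_left hsl
              (show (0:ℝ) ≤ 2 * P ^ 2 * J ^ 3 * c * a by positivity)]
  calc (s + c ^ 2) ^ 2 * P * G / (R * c ^ 4 * (ρ * W))
      ≤ (2 * s ^ 2 + 2 * c ^ 4) * P * G / (R * c ^ 4 * (ρ * W)) := step1
    _ = _ + _ := split
    _ ≤ 12 * (P ^ 3 * J ^ 3) / (c ^ 3 * a) + 6 * (P ^ 3 * J ^ 3) / (c ^ 3 * a) := add_le_add T1 T2
    _ = 18 * (P ^ 3 / c ^ 3) * J ^ 3 / a := by field_simp; ring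

set_option maxHeartbeats 2000000 in
/-- There is `C > 0` such that for every `c ≥ 1` and all `p ≠ q`, the quadratic form
of the relativistic Landau kernel in the direction `p` satisfies
`Σ_{i,j} Φ^{c,ij}(p,q) p_i p_j ≤ C·((p⁰)³/c³)·⟨q⟩⁶·|p−q|⁻¹`. -/
theorem stmt11 :
    ∃ C : ℝ, 0 < C ∧ ∀ (c : ℝ), 1 ≤ c → ∀ p q : E3, p ≠ q →
      (∑ i, ∑ j, Phi c p q i j * p i * p j)
        ≤ C * (pZ c p ^ 3 / c ^ 3) * jb q ^ 6 * ‖p - q‖⁻¹ := by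
  refine ⟨18, by norm_num, ?_⟩
  intro c hc p q hpq
  have hc0 : (0:ℝ) < c := lt_of_lt_of_le one_pos hc
  have hP2 : pZ c p ^ 2 = c ^ 2 + ‖p‖ ^ 2 := Real.sq_sqrt (by positivity)
  have hR2 : pZ c q ^ 2 = c ^ 2 + ‖q‖ ^ 2 := Real.sq_sqrt (by positivity)
  have hJ2 : jb q ^ 2 = 1 + ‖q‖ ^ 2 := Real.sq_sqrt (by positivity)
  have hcP : c ≤ pZ c p := by
    have h := Real.sqrt_le_sqrt (show c ^ 2 ≤ c ^ 2 + ‖p‖ ^ 2 from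
      le_add_of_nonneg_right (by positivity))
    rwa [Real.sqrt_sq hc0.le] at h
  have hcR : c ≤ pZ c q := by
    have h := Real.sqrt_le_sqrt (show c ^ 2 ≤ c ^ 2 + ‖q‖ ^ 2 from
      le_add_of_nonneg_right (by positivity))
    rwa [Real.sqrt_sq hc0.le] at h
  have hP0 : (0:ℝ) < pZ c p := lt_of_lt_of_le hc0 hcP
  have hR0 : (0:ℝ) < pZ c q := lt_of_lt_of_le hc0 hcR
  have h1J : (1:ℝ) ≤ jb q := by
    have h := Real.sqrt_le_sqrt (show (1:ℝ) ≤ 1 + ‖q‖ ^ 2 from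
      le_add_of_nonneg_right (by positivity))
    rwa [Real.sqrt_one] at h
  have hJ0 : (0:ℝ) < jb q := lt_of_lt_of_le one_pos h1J
  have hRcJ : pZ c q ≤ c * jb q := by
    have h1 : c ^ 2 + ‖q‖ ^ 2 ≤ (c * jb q) ^ 2 := by
      rw [mul_pow, hJ2]
      have h1c2 : (1:ℝ) ≤ c ^ 2 := by nlinarith
      nlinarith [mul_nonneg (sub_nonneg.mpr h1c2) (sq_nonneg ‖q‖)]
    have h := Real.sqrt_le_sqrt h1
    rwa [show Real.sqrt ((c * jb q) ^ 2) = c * jb q from Real.sqrt_sq (by positivity)] at h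
  have hRPJ : pZ c q ≤ pZ c p * jb q :=
    le_trans hRcJ (mul_le_mul_of_nonneg_right hcP hJ0.le)
  have h1P : (1:ℝ) ≤ pZ c p := le_trans hc hcP
  have hCS : dotp p q ^ 2 ≤ ‖p‖ ^ 2 * ‖q‖ ^ 2 := by
    have h := real_inner_mul_inner_self_le p q
    rw [real_inner_self_eq_norm_sq, real_inner_self_eq_norm_sq] at h
    calc dotp p q ^ 2 = inner ℝ p q * inner ℝ p q := by rw [dotp]; ring
      _ ≤ ‖p‖ ^ 2 * ‖q‖ ^ 2 := h
  have ha0 : (0:ℝ) < ‖p - q‖ := norm_sub_pos_iff.mpr hpq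
  have ha2 : ‖p - q‖ ^ 2 = ‖p‖ ^ 2 - 2 * dotp p q + ‖q‖ ^ 2 := by
    rw [norm_sub_sq_real]; rfl
  have hPR2 : (pZ c p * pZ c q) ^ 2 = (c ^ 2 + ‖p‖ ^ 2) * (c ^ 2 + ‖q‖ ^ 2) := by
    rw [mul_pow, hP2, hR2]
  obtain ⟨hG0, hGa, hs0, hsl, hsl2, haPJ⟩ :=
    stmt11_prelim c (pZ c p) (pZ c q) (jb q) (dotp p q) (‖p‖ ^ 2) (‖q‖ ^ 2) ‖p - q‖
      hc hP2 hJ2 hcP hcR hRPJ h1J h1P hCS (by positivity) (by positivity) hPR2 ha2 ha0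
  -- the sum identity
  have hSmat : (∑ i, ∑ j, Smat c p q i j * p i * p j)
      = ((pZ c p * pZ c q - dotp p q) ^ 2 - c ^ 4) / c ^ 2 * dotp p p
        - (dotp p p - dotp p q) ^ 2
        + (pZ c p * pZ c q - dotp p q - c ^ 2) / c ^ 2 * (2 * dotp p q * dotp p p) := by
    have hd : ∀ x y : E3, dotp x y = x 0 * y 0 + x 1 * y 1 + x 2 * y 2 := by
      intro x y
      simp [dotp, PiLp.inner_apply, RCLike.inner_apply, Fin.sum_univ_three]; ring
    simp only [Smat, Fin.sum_univ_three, Fin.reduceEq, reduceIte, if_true, if_false]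
    rw [hd p p, hd p q]
    ring
  have hpp : dotp p p = ‖p‖ ^ 2 := real_inner_self_eq_norm_sq p
  have hsum : (∑ i, ∑ j, Phi c p q i j * p i * p j)
      = c / pZ c p * (c / pZ c q) * Lam c p q * (∑ i, ∑ j, Smat c p q i j * p i * p j) := by
    rw [Finset.mul_sum]
    refine Finset.sum_congr rfl fun i _ => ?_
    rw [Finset.mul_sum]
    refine Finset.sum_congr rfl fun j _ => ?_
    simp only [Phi]; ring
  have hQ : ((pZ c p * pZ c q - dotp p q) ^ 2 - c ^ 4) / c ^ 2 * dotp p p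
        - (dotp p p - dotp p q) ^ 2
        + (pZ c p * pZ c q - dotp p q - c ^ 2) / c ^ 2 * (2 * dotp p q * dotp p p)
      = (‖p‖ ^ 2 * ‖q‖ ^ 2 - dotp p q ^ 2) * pZ c p ^ 2 / c ^ 2 := by
    rw [hpp, hP2]
    have hcne : (c:ℝ) ≠ 0 := ne_of_gt hc0
    field_simp
    linear_combination (‖p‖ ^ 2) * hPR2
  have hfinal := stmt11_endgame c (pZ c p) (pZ c q) (jb q) ‖p - q‖
    (pZ c p * pZ c q - dotp p q - c ^ 2)
    (‖p‖ ^ 2 * ‖q‖ ^ 2 - dotp p q ^ 2)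
    (((pZ c p * pZ c q - dotp p q) ^ 2 - c ^ 4) / c ^ 2)
    (pZ c p * pZ c q - dotp p q)
    hc hcP hcR h1J ha0 hG0 hGa hs0 hsl hsl2 haPJ (by ring) (by field_simp; ring)
  calc (∑ i, ∑ j, Phi c p q i j * p i * p j)
      = c / pZ c p * (c / pZ c q) *
          ((pZ c p * pZ c q - dotp p q) ^ 2 / c ^ 4 *
            (((pZ c p * pZ c q - dotp p q) ^ 2 - c ^ 4) / c ^ 2) ^ (-(3 : ℝ) / 2)) *
          ((‖p‖ ^ 2 * ‖q‖ ^ 2 - dotp p q ^ 2) * pZ c p ^ 2 / c ^ 2) := by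
        rw [hsum, hSmat, hQ]
        simp only [Lam]
    _ ≤ 18 * (pZ c p ^ 3 / c ^ 3) * jb q ^ 3 / ‖p - q‖ := hfinal
    _ = 18 * (pZ c p ^ 3 / c ^ 3) * jb q ^ 3 * ‖p - q‖⁻¹ := by rw [div_eq_mul_inv]
    _ ≤ 18 * (pZ c p ^ 3 / c ^ 3) * jb q ^ 6 * ‖p - q‖⁻¹ := by
        have hpow : jb q ^ 3 ≤ jb q ^ 6 := pow_le_pow_right₀ h1J (by norm_num)
        exact mul_le_mul_of_nonneg_right
          (mul_le_mul_of_nonneg_left hpow (by positivity)) (by positivity)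

end
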